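/- Let a, b ∈ 𝔻 be distinct, let m ≥ 1, and let ψ = (τ_a·τ_b)^m. For φ ∈ Aut(𝔻), the composition operator C_φ (f ↦ f ∘ φ) is a well-defined algebra automorphism of ψH^∞ if and only if either φ is the identity map of 𝔻 or φ = τ_a ∘ τ_c ∘ τ_a where c = τ_a(b). -/

import Mathlib

open Complex Metric Set

local notation "𝔻" => Complex.UnitDisc

/-- The closed unit disc, as a subset of `ℂ`. -/
def cD : Set ℂ := Metric.closedBall 0 1

/-- A function on the open unit disc is analytic (holomorphic):
it is the restriction of a function differentiable on the open unit ball. -/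
def HolOn (f : 𝔻 → ℂ) : Prop :=
  ∃ F : ℂ → ℂ, DifferentiableOn ℂ F (Metric.ball 0 1) ∧ ∀ z : 𝔻, F ↑z = f z

/-- Membership in `H^∞`, the algebra of bounded analytic functions on the unit disc. -/
def MemHinf (f : 𝔻 → ℂ) : Prop :=
  HolOn f ∧ ∃ M : ℝ, ∀ z : 𝔻, ‖f z‖ ≤ M

/-- Membership in the disc algebra `A(𝔻)`: continuous on the closed unit disc,
analytic in its interior. -/
def MemDiscAlg (f : ↥cD → ℂ) : Prop :=
  ∃ F : ℂ → ℂ, ContinuousOn F cD ∧ DifferentiableOn ℂ F (Metric.ball 0 1) ∧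
    ∀ z : ↥cD, F ↑z = f z

/-- `φ ∈ Aut(𝔻)`: a bijective analytic self-map of the unit disc. -/
def IsDiscAut (φ : 𝔻 → 𝔻) : Prop :=
  (∃ F : ℂ → ℂ, DifferentiableOn ℂ F (Metric.ball 0 1) ∧ ∀ z : 𝔻, F ↑z = ↑(φ z)) ∧
  Function.Bijective φ

/-- A Möbius automorphism of the unit disc, given by its global formula
`Φ z = η (a - z) / (1 - conj a * z)` with `|a| < 1`, `|η| = 1`; this is the analytic
extension to (a neighbourhood of) the closed unit disc of a disc automorphism. -/
def IsMobius (Φ : ℂ → ℂ) : Prop :=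
  ∃ a η : ℂ, ‖a‖ < 1 ∧ ‖η‖ = 1 ∧
    ∀ z : ℂ, Φ z = η * (a - z) / (1 - (starRingEnd ℂ) a * z)

/-- `T` is an algebra automorphism of the set `A` of complex-valued functions:
a bijective, `ℂ`-linear and multiplicative self-map of `A`. -/
def IsAlgAutOn {ι : Type} (A : Set (ι → ℂ)) (T : (ι → ℂ) → (ι → ℂ)) : Prop :=
  (∀ f ∈ A, T f ∈ A) ∧
  (∀ f ∈ A, ∀ g ∈ A, T (f + g) = T f + T g) ∧
  (∀ (c : ℂ), ∀ f ∈ A, T (c • f) = c • T f) ∧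
  (∀ f ∈ A, ∀ g ∈ A, T (f * g) = T f * T g) ∧
  Set.InjOn T A ∧ Set.SurjOn T A A

/-- The subalgebra `ψ H^∞ = {ψ · g : g ∈ H^∞}`. -/
def psiH (ψ : 𝔻 → ℂ) : Set (𝔻 → ℂ) :=
  {f | ∃ g, MemHinf g ∧ f = fun z => ψ z * g z}

/-- The subalgebra `ψ A(𝔻) = {ψ · g : g ∈ A(𝔻)}`. -/
def psiA (ψ : ↥cD → ℂ) : Set (↥cD → ℂ) :=
  {f | ∃ g, MemDiscAlg g ∧ f = fun z => ψ z * g z}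

/-- The composition operator `C_φ : f ↦ f ∘ φ` is a well-defined algebra automorphism
of the set `A` (it is automatically linear and multiplicative). -/
def CompAutOn (A : Set (𝔻 → ℂ)) (φ : 𝔻 → 𝔻) : Prop :=
  (∀ f ∈ A, f ∘ φ ∈ A) ∧ Set.InjOn (fun f => f ∘ φ) A ∧ Set.SurjOn (fun f => f ∘ φ) A A

/-- The Möbius factor `τ_a(z) = (a - z)/(1 - conj a · z)`. -/
noncomputable def mobius (a z : ℂ) : ℂ := (a - z) / (1 - (starRingEnd ℂ) a * z)

/-- `f` has a zero of order (multiplicity) `k` at `w`: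
`f z = (z - w)^k g z` with `g` analytic and `g w ≠ 0`. -/
def ZeroOrderAt (f : 𝔻 → ℂ) (w : 𝔻) (k : ℕ) : Prop :=
  ∃ g : 𝔻 → ℂ, HolOn g ∧ g w ≠ 0 ∧ ∀ z : 𝔻, f z = ((z : ℂ) - (w : ℂ)) ^ k * g z

/-- `g` is an invertible element of `H^∞`. -/
def InvHinf (g : 𝔻 → ℂ) : Prop :=
  MemHinf g ∧ ∃ h : 𝔻 → ℂ, MemHinf h ∧ ∀ z, g z * h z = 1

/-- `g` is an invertible element of the disc algebra `A(𝔻)`. -/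
def InvDiscAlg (g : ↥cD → ℂ) : Prop :=
  MemDiscAlg g ∧ ∃ h : ↥cD → ℂ, MemDiscAlg h ∧ ∀ z, g z * h z = 1

/-!
The zeros of `ψ = (τ_a τ_b)^m` in the disc are exactly `a` and `b`, and `ψ ∘ φ = ψ g` with
`g ∈ H^∞` forces `φ` to map `{a, b}` into itself; being injective, `φ` either fixes both points
or exchanges them. A holomorphic self-map of the disc with two fixed points is the identity
(conjugate one fixed point to `0` by `τ_p` and apply the equality case of Schwarz's lemma). This
settles the first case, and in the second it applies to `σ ∘ φ`, where `σ = τ_a ∘ τ_c ∘ τ_a` is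
the involution exchanging `a` and `b`. Conversely, `τ_a ∘ σ` and `τ_b ∘ σ` are constant multiples
of `τ_b` and `τ_a`, so `ψ ∘ σ` is a constant multiple of `ψ`; hence `C_σ` maps `ψ H^∞` into
itself, and it is its own inverse.
-/

open ComplexConjugate

section Mobius

variable {u v z : ℂ}

lemma one_sub_conj_mul_ne_zero (hu : ‖u‖ < 1) (hz : ‖z‖ < 1) : 1 - conj u * z ≠ 0 := by
  refine sub_ne_zero.2 fun h => ?_
  have : ‖conj u * z‖ < 1 := by
    rw [norm_mul, RCLike.norm_conj]
    exact mul_lt_one_of_nonneg_of_lt_one_left (norm_nonneg u) hu hz.le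
  simp [← h] at this

lemma one_sub_mul_conj_ne_zero (hu : ‖u‖ < 1) (hz : ‖z‖ < 1) : 1 - u * conj z ≠ 0 := by
  simpa [mul_comm] using one_sub_conj_mul_ne_zero hz hu

lemma normSq_one_sub_conj_mul_sub_normSq_sub (u z : ℂ) :
    normSq (1 - conj u * z) - normSq (u - z) = (1 - normSq u) * (1 - normSq z) := by
  simp only [normSq_apply, sub_re, sub_im, mul_re, mul_im, conj_re, conj_im, one_re, one_im]
  ring

lemma norm_mobius_lt_one (hu : ‖u‖ < 1) (hz : ‖z‖ < 1) : ‖mobius u z‖ < 1 := by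
  have hd := one_sub_conj_mul_ne_zero hu hz
  rw [mobius, norm_div, div_lt_one (norm_pos_iff.2 hd),
    ← sq_lt_sq₀ (norm_nonneg _) (norm_nonneg _), ← normSq_eq_norm_sq, ← normSq_eq_norm_sq,
    ← sub_pos, normSq_one_sub_conj_mul_sub_normSq_sub]
  have hu' : normSq u < 1 := by rw [normSq_eq_norm_sq]; nlinarith [norm_nonneg u]
  have hz' : normSq z < 1 := by rw [normSq_eq_norm_sq]; nlinarith [norm_nonneg z]
  exact mul_pos (sub_pos.2 hu') (sub_pos.2 hz')

lemma mobius_mobius (hu : ‖u‖ < 1) (hz : ‖z‖ < 1) : mobius u (mobius u z) = z := by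
  have hd := one_sub_conj_mul_ne_zero hu hz
  have hnum : u - mobius u z = (1 - u * conj u) * z / (1 - conj u * z) := by
    rw [mobius, sub_div' hd]; ring_nf
  have hden : 1 - conj u * mobius u z = (1 - u * conj u) / (1 - conj u * z) := by
    rw [mobius, mul_div_assoc', one_sub_div hd]; ring_nf
  rw [mobius, hnum, hden, div_div_div_cancel_right₀ hd,
    mul_div_cancel_left₀ _ (one_sub_mul_conj_ne_zero hu hu)]

lemma mobius_mobius_mobius (hu : ‖u‖ < 1) (hv : ‖v‖ < 1) (hz : ‖z‖ < 1) :
    mobius (mobius u v) (mobius u z) = (u * conj v - 1) / (1 - conj u * v) * mobius v z := by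
  have d1 := one_sub_conj_mul_ne_zero hu hv
  have d2 := one_sub_mul_conj_ne_zero hu hv
  have d3 := one_sub_conj_mul_ne_zero hu hz
  have hnum : mobius u v - mobius u z
      = (1 - u * conj u) * (z - v) / ((1 - conj u * v) * (1 - conj u * z)) := by
    rw [mobius, mobius, div_sub_div _ _ d1 d3]; ring_nf
  have hden : 1 - conj (mobius u v) * mobius u z
      = (1 - u * conj u) * (1 - conj v * z) / ((1 - u * conj v) * (1 - conj u * z)) := by
    rw [mobius, mobius, map_div₀, div_mul_div_comm, one_sub_div (by simpa using mul_ne_zero d2 d3)]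
    simp only [map_sub, map_mul, conj_conj, map_one]
    ring_nf
  rw [mobius, hnum, hden, mobius]
  field_simp [one_sub_mul_conj_ne_zero hu hu, one_sub_conj_mul_ne_zero hv hz]
  ring

lemma mobius_zero (u : ℂ) : mobius u 0 = u := by simp [mobius]

lemma mobius_self (u : ℂ) : mobius u u = 0 := by simp [mobius]

lemma mobius_eq_zero_iff (hu : ‖u‖ < 1) (hz : ‖z‖ < 1) : mobius u z = 0 ↔ z = u := by
  rw [mobius, div_eq_zero_iff, sub_eq_zero, or_iff_left (one_sub_conj_mul_ne_zero hu hz), eq_comm]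

lemma mapsTo_mobius (hu : ‖u‖ < 1) : MapsTo (mobius u) (ball 0 1) (ball 0 1) := fun z hz => by
  rw [mem_ball_zero_iff] at hz ⊢
  exact norm_mobius_lt_one hu hz

lemma differentiableOn_mobius (hu : ‖u‖ < 1) : DifferentiableOn ℂ (mobius u) (ball 0 1) :=
  fun _ hz => DifferentiableAt.differentiableWithinAt <|
    ((differentiableAt_const u).sub differentiableAt_id).div
      ((differentiableAt_const 1).sub ((differentiableAt_const _).mul differentiableAt_id))
      (one_sub_conj_mul_ne_zero hu (mem_ball_zero_iff.1 hz))

end Mobius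

noncomputable def mobiusSwap (a b z : ℂ) : ℂ := mobius a (mobius (mobius a b) (mobius a z))

section MobiusSwap

variable {a b : ℂ}

lemma mobiusSwap_left (ha : ‖a‖ < 1) (hb : ‖b‖ < 1) : mobiusSwap a b a = b := by
  rw [mobiusSwap, mobius_self, mobius_zero, mobius_mobius ha hb]

lemma mobiusSwap_right (a b : ℂ) : mobiusSwap a b b = a := by
  rw [mobiusSwap, mobius_self, mobius_zero]

lemma mobiusSwap_mobiusSwap (ha : ‖a‖ < 1) (hb : ‖b‖ < 1) {z : ℂ} (hz : ‖z‖ < 1) :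
    mobiusSwap a b (mobiusSwap a b z) = z := by
  have hc := norm_mobius_lt_one ha hb
  have haz := norm_mobius_lt_one ha hz
  rw [mobiusSwap, mobiusSwap, mobius_mobius ha (norm_mobius_lt_one hc haz), mobius_mobius hc haz,
    mobius_mobius ha hz]

lemma mapsTo_mobiusSwap (ha : ‖a‖ < 1) (hb : ‖b‖ < 1) :
    MapsTo (mobiusSwap a b) (ball 0 1) (ball 0 1) :=
  (mapsTo_mobius ha).comp ((mapsTo_mobius (norm_mobius_lt_one ha hb)).comp (mapsTo_mobius ha))

lemma differentiableOn_mobiusSwap (ha : ‖a‖ < 1) (hb : ‖b‖ < 1) :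
    DifferentiableOn ℂ (mobiusSwap a b) (ball 0 1) :=
  (differentiableOn_mobius ha).comp
    ((differentiableOn_mobius (norm_mobius_lt_one ha hb)).comp (differentiableOn_mobius ha)
      (mapsTo_mobius ha))
    ((mapsTo_mobius (norm_mobius_lt_one ha hb)).comp (mapsTo_mobius ha))

lemma exists_mobius_mul_mobius_mobiusSwap (ha : ‖a‖ < 1) (hb : ‖b‖ < 1) :
    ∃ k : ℂ, ∀ z : ℂ, ‖z‖ < 1 →
    mobius a (mobiusSwap a b z) * mobius b (mobiusSwap a b z) = k * (mobius a z * mobius b z) := by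
  set c := mobius a b
  have hc : ‖c‖ < 1 := norm_mobius_lt_one ha hb
  refine ⟨(a * conj b - 1) / (1 - conj a * b) * ((a * conj c - 1) / (1 - conj a * c)),
    fun z hz => ?_⟩
  have haz := norm_mobius_lt_one ha hz
  have hcaz := norm_mobius_lt_one hc haz
  have hb_eq : b = mobius a c := (mobius_mobius ha hb).symm
  have h_a : mobius a (mobiusSwap a b z) = (a * conj b - 1) / (1 - conj a * b) * mobius b z := by
    rw [mobiusSwap, mobius_mobius ha hcaz, mobius_mobius_mobius ha hb hz]
  have h_b : mobius b (mobiusSwap a b z) = (a * conj c - 1) / (1 - conj a * c) * mobius a z := by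
    rw [show mobiusSwap a b z = mobius a (mobius c (mobius a z)) from rfl, hb_eq,
      mobius_mobius_mobius ha hc hcaz, mobius_mobius hc haz]
  rw [h_a, h_b]
  ring

end MobiusSwap

lemma eqOn_id_of_mapsTo_ball_of_fixes_zero {f : ℂ → ℂ} (hf : DifferentiableOn ℂ f (ball 0 1))
    (hmaps : MapsTo f (ball 0 1) (ball 0 1)) (h0 : f 0 = 0) {c : ℂ} (hc : ‖c‖ < 1) (hc0 : c ≠ 0)
    (hfc : f c = c) : EqOn f id (ball 0 1) := by
  have hslope : dslope f 0 c = 1 := by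
    rw [dslope_of_ne _ hc0, slope_def_field, hfc, h0, sub_zero, div_self hc0]
  have hmaps' : MapsTo f (ball 0 1) (closedBall (f 0) 1) := by
    rw [h0]; exact hmaps.mono_right ball_subset_closedBall
  have h_affine := affine_of_mapsTo_ball_of_norm_dslope_eq_div hf hmaps'
    (mem_ball_zero_iff.2 hc) (by simp [hslope])
  intro z hz
  simpa [h0, hslope] using h_affine hz

lemma eqOn_id_of_mapsTo_ball_of_fixes_two {F : ℂ → ℂ} (hF : DifferentiableOn ℂ F (ball 0 1))
    (hmaps : MapsTo F (ball 0 1) (ball 0 1)) {p q : ℂ} (hp : ‖p‖ < 1) (hq : ‖q‖ < 1) (hpq : p ≠ q)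
    (hFp : F p = p) (hFq : F q = q) : EqOn F id (ball 0 1) := by
  have hg : EqOn (mobius p ∘ F ∘ mobius p) id (ball 0 1) := by
    refine eqOn_id_of_mapsTo_ball_of_fixes_zero ?_ ?_ ?_ (norm_mobius_lt_one hp hq) ?_ ?_
    · exact (differentiableOn_mobius hp).comp
        (hF.comp (differentiableOn_mobius hp) (mapsTo_mobius hp)) (hmaps.comp (mapsTo_mobius hp))
    · exact (mapsTo_mobius hp).comp (hmaps.comp (mapsTo_mobius hp))
    · simp only [Function.comp_apply, mobius_zero, hFp, mobius_self]
    · exact fun h => hpq ((mobius_eq_zero_iff hp hq).1 h).symm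
    · simp only [Function.comp_apply, mobius_mobius hp hq, hFq]
  intro z hz
  have hz' := mem_ball_zero_iff.1 hz
  have h := hg (mapsTo_mobius hp hz)
  simp only [Function.comp_apply, mobius_mobius hp hz', id] at h
  calc F z = mobius p (mobius p (F z)) := (mobius_mobius hp (mem_ball_zero_iff.1 (hmaps hz))).symm
    _ = z := by rw [h, mobius_mobius hp hz']

lemma eqOn_of_mapsTo_ball_of_eq_at_two_points {F σ : ℂ → ℂ}
    (hF : DifferentiableOn ℂ F (ball 0 1)) (hFm : MapsTo F (ball 0 1) (ball 0 1))
    (hσ : DifferentiableOn ℂ σ (ball 0 1)) (hσm : MapsTo σ (ball 0 1) (ball 0 1))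
    (hσσ : ∀ z : ℂ, ‖z‖ < 1 → σ (σ z) = z) {p q : ℂ} (hp : ‖p‖ < 1) (hq : ‖q‖ < 1) (hpq : p ≠ q)
    (hFp : F p = σ p) (hFq : F q = σ q) : EqOn F σ (ball 0 1) := by
  have hid : EqOn (σ ∘ F) id (ball 0 1) :=
    eqOn_id_of_mapsTo_ball_of_fixes_two (hσ.comp hF hFm) (hσm.comp hFm) hp hq hpq
      (by simp [hFp, hσσ p hp]) (by simp [hFq, hσσ q hq])
  intro z hz
  calc F z = σ (σ (F z)) := (hσσ _ (mem_ball_zero_iff.1 (hFm hz))).symm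
    _ = σ z := congrArg σ (hid hz)

section CompositionOperator

variable {φ : 𝔻 → 𝔻} {F : ℂ → ℂ}

lemma mapsTo_ball_of_extends (hFφ : ∀ z : 𝔻, F z = φ z) : MapsTo F (ball 0 1) (ball 0 1) := by
  intro w hw
  rw [mem_ball_zero_iff] at hw ⊢
  rw [← UnitDisc.coe_mk w hw, hFφ]
  exact (φ _).norm_lt_one

lemma MemHinf.const_mul {g : 𝔻 → ℂ} (hg : MemHinf g) (c : ℂ) : MemHinf fun z => c * g z := by
  obtain ⟨⟨G, hG, hGg⟩, M, hM⟩ := hg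
  refine ⟨⟨fun w => c * G w, (differentiableOn_const c).mul hG, fun z => by simp [hGg]⟩,
    ‖c‖ * M, fun z => ?_⟩
  rw [norm_mul]
  exact mul_le_mul_of_nonneg_left (hM z) (norm_nonneg c)

lemma MemHinf.comp {g : 𝔻 → ℂ} (hg : MemHinf g) (hF : DifferentiableOn ℂ F (ball 0 1))
    (hFφ : ∀ z : 𝔻, F z = φ z) : MemHinf (g ∘ φ) := by
  obtain ⟨⟨G, hG, hGg⟩, M, hM⟩ := hg
  exact ⟨⟨G ∘ F, hG.comp hF (mapsTo_ball_of_extends hFφ), fun z => by simp [hFφ, hGg]⟩,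
    M, fun z => hM (φ z)⟩

lemma comp_mem_psiH {ψ : 𝔻 → ℂ} {c : ℂ} (hψ : ∀ z, ψ (φ z) = c * ψ z)
    (hF : DifferentiableOn ℂ F (ball 0 1)) (hFφ : ∀ z : 𝔻, F z = φ z) {f : 𝔻 → ℂ}
    (hf : f ∈ psiH ψ) : f ∘ φ ∈ psiH ψ := by
  obtain ⟨g, hg, rfl⟩ := hf
  refine ⟨_, (hg.comp hF hFφ).const_mul c, funext fun z => ?_⟩
  simp only [Function.comp_apply, hψ]
  ring

lemma compAutOn_of_involutive {A : Set (𝔻 → ℂ)} (hφ : Function.Involutive φ)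
    (hA : ∀ f ∈ A, f ∘ φ ∈ A) : CompAutOn A φ := by
  have hcomp : ∀ f : 𝔻 → ℂ, (f ∘ φ) ∘ φ = f := fun f => by
    rw [Function.comp_assoc, hφ.comp_self, Function.comp_id]
  refine ⟨hA, fun f _ g _ hfg => ?_, fun f hf => ⟨f ∘ φ, hA f hf, hcomp f⟩⟩
  rw [← hcomp f, ← hcomp g]
  exact congrArg (· ∘ φ) hfg

lemma coe_apply_eq_of_eq_at_two_points (hF : DifferentiableOn ℂ F (ball 0 1))
    (hFφ : ∀ z : 𝔻, F z = φ z) {σ : ℂ → ℂ} (hσ : DifferentiableOn ℂ σ (ball 0 1))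
    (hσm : MapsTo σ (ball 0 1) (ball 0 1)) (hσσ : ∀ z : ℂ, ‖z‖ < 1 → σ (σ z) = z) {p q : 𝔻}
    (hpq : p ≠ q) (hp : (φ p : ℂ) = σ p) (hq : (φ q : ℂ) = σ q) (z : 𝔻) : (φ z : ℂ) = σ z := by
  have hFσ := eqOn_of_mapsTo_ball_of_eq_at_two_points hF (mapsTo_ball_of_extends hFφ) hσ hσm hσσ
    p.norm_lt_one q.norm_lt_one (UnitDisc.coe_inj.not.2 hpq) (by rw [hFφ, hp])
    (by rw [hFφ, hq])
  rw [← hFφ]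
  exact hFσ (mem_ball_zero_iff.2 z.norm_lt_one)

lemma CompAutOn.apply_eq_zero {ψ : 𝔻 → ℂ} (h : CompAutOn (psiH ψ) φ) {z : 𝔻} (hz : ψ z = 0) :
    ψ (φ z) = 0 := by
  have hone : MemHinf fun _ => 1 := ⟨⟨fun _ => 1, differentiableOn_const 1, fun _ => rfl⟩, 1,
    fun _ => by simp⟩
  obtain ⟨g, -, hg⟩ := h.1 ψ ⟨_, hone, by simp⟩
  simpa [hz] using congrFun hg z

end CompositionOperator

lemma mobius_mul_mobius_pow_eq_zero_iff {m : ℕ} (hm : m ≠ 0) (a b z : 𝔻) :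
    (mobius a z * mobius b z) ^ m = 0 ↔ z = a ∨ z = b := by
  simp only [pow_eq_zero_iff hm, mul_eq_zero, mobius_eq_zero_iff a.norm_lt_one z.norm_lt_one,
    mobius_eq_zero_iff b.norm_lt_one z.norm_lt_one, UnitDisc.coe_inj]

lemma Function.Injective.fixes_or_swaps {α : Type*} {f : α → α} (hf : Injective f) {a b : α}
    (hab : a ≠ b) (ha : f a = a ∨ f a = b) (hb : f b = a ∨ f b = b) :
    (f a = a ∧ f b = b) ∨ (f a = b ∧ f b = a) := by
  rcases ha with ha | ha <;> rcases hb with hb | hb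
  · exact absurd (hf (ha.trans hb.symm)) hab
  · exact .inl ⟨ha, hb⟩
  · exact .inr ⟨ha, hb⟩
  · exact absurd (hf (ha.trans hb.symm)) hab

/-- for distinct `a, b ∈ 𝔻`, `m ≥ 1`, `ψ = (τ_a τ_b)^m` and `φ ∈ Aut(𝔻)`,
the composition operator `C_φ` is a well-defined algebra automorphism of `ψ H^∞` iff
`φ` is the identity or `φ = τ_a ∘ τ_c ∘ τ_a` with `c = τ_a(b)`. -/
theorem stmt_19 (a b : 𝔻) (hab : a ≠ b) (m : ℕ) (hm : 1 ≤ m)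
    (φ : 𝔻 → 𝔻) (hφ : IsDiscAut φ) :
    CompAutOn (psiH (fun z : 𝔻 => (mobius ↑a ↑z * mobius ↑b ↑z) ^ m)) φ ↔
      (∀ z : 𝔻, φ z = z) ∨
      (∀ z : 𝔻, (↑(φ z) : ℂ) = mobius ↑a (mobius (mobius ↑a ↑b) (mobius ↑a ↑z))) := by
  obtain ⟨⟨F, hF, hFφ⟩, hinj, -⟩ := hφ
  have ha := a.norm_lt_one
  have hb := b.norm_lt_one
  have hzeros := mobius_mul_mobius_pow_eq_zero_iff (by omega : m ≠ 0) a b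
  change _ ↔ _ ∨ ∀ z : 𝔻, (φ z : ℂ) = mobiusSwap a b z
  constructor
  · intro h
    have hφab : ∀ w, w = a ∨ w = b → φ w = a ∨ φ w = b := fun w hw =>
      (hzeros _).1 (h.apply_eq_zero ((hzeros w).2 hw))
    rcases hinj.fixes_or_swaps hab (hφab a (.inl rfl)) (hφab b (.inr rfl)) with
      ⟨hfa, hfb⟩ | ⟨hsa, hsb⟩
    · exact .inl fun z => UnitDisc.coe_injective <| coe_apply_eq_of_eq_at_two_points hF hFφ
        differentiableOn_id (mapsTo_id _) (fun _ _ => rfl) hab (by rw [hfa]; rfl)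
        (by rw [hfb]; rfl) z
    · exact .inr <| coe_apply_eq_of_eq_at_two_points hF hFφ (differentiableOn_mobiusSwap ha hb)
        (mapsTo_mobiusSwap ha hb) (fun _ => mobiusSwap_mobiusSwap ha hb) hab
        (by rw [hsa, mobiusSwap_left ha hb]) (by rw [hsb, mobiusSwap_right])
  · rintro (hid | hswap)
    · obtain rfl : φ = id := funext hid
      exact compAutOn_of_involutive (fun _ => rfl) fun _ => id
    · obtain ⟨k, hk⟩ := exists_mobius_mul_mobius_mobiusSwap ha hb
      refine compAutOn_of_involutive (fun z => UnitDisc.coe_injective ?_)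
        fun f hf => comp_mem_psiH (c := k ^ m) (fun z => ?_) hF hFφ hf
      · rw [hswap, hswap, mobiusSwap_mobiusSwap ha hb z.norm_lt_one]
      · simp only [hswap, hk _ z.norm_lt_one, mul_pow]
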